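/- arXiv:2204.03348 — 2 statements merged into one kernel-verified Lean document; each statement's English description precedes it below -/
import Mathlib

section
/- Let T be a finite rooted tree with root r, and let f be a real-valued function on the nodes of T that is strictly increasing along every directed edge (oriented away from r). Then the barcode produced by the topological morphology descriptor algorithm TMD(T,f) coincides with the negation of the zero-dimensional extended persistent homology barcode of T with respect to -f; that is, TMD(T,f) = -EPH_0(T,-f). -/
/-- A finite rooted tree, with a real number (the value of a function `f`,
e.g. a distance from the root) attached to each node. -/
inductive RTree : Type where
  | node (val : ℝ) (children : List RTree)

namespace RTree

/-- The value of `f` at the root. -/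
def rootVal : RTree → ℝ
  | node x _ => x

/-- The maximal value of `f` on the subtree (under a function increasing away
from the root, this is the maximal value of `f` on the leaves). -/
def maxLeaf : RTree → ℝ
  | node x ts => ts.attach.foldr (fun c m => max (maxLeaf c.1) m) x
  decreasing_by
    have := List.sizeOf_lt_of_mem c.2
    simp only [RTree.node.sizeOf_spec] at *
    omega

/-- `f` is strictly increasing along edges directed away from the root. -/
inductive Increasing : RTree → Prop
  | node {x ts} : (∀ c ∈ ts, x < rootVal c) → (∀ c ∈ ts, Increasing c) →
      Increasing (node x ts)

/-- The bars of the TMD algorithm other than the final bar `[f(r), L]`: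
at each branch point, every detached child branch contributes a bar
`(f(branch point), max of f on the leaves of the branch]`; equivalently, each
child contributes such a candidate bar and one copy of a maximal one (the
branch that stays attached) is removed. -/
noncomputable def tmdAux : RTree → Multiset (ℝ × ℝ)
  | node x ts =>
    (↑(ts.map fun c => (x, maxLeaf c)) - {(x, maxLeaf (node x ts))})
      + (ts.attach.map fun c => tmdAux c.1).sum
  decreasing_by
    have := List.sizeOf_lt_of_mem c.2
    simp only [RTree.node.sizeOf_spec] at *
    omega

/-- The topological morphology descriptor barcode, as a multiset of pairs
(left endpoint, right endpoint). -/
noncomputable def tmd (T : RTree) : Multiset (ℝ × ℝ) :=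
  (T.rootVal, T.maxLeaf) ::ₘ T.tmdAux

/-- The multiset of values of `f` at the leaves. -/
def leafVals : RTree → Multiset ℝ
  | node x ts =>
    if ts.isEmpty then {x}
    else (ts.attach.map fun c => leafVals c.1).sum
  decreasing_by
    have := List.sizeOf_lt_of_mem c.2
    simp only [RTree.node.sizeOf_spec] at *
    omega

end RTree

namespace RTree

/-- For `s' ≤ s` and `f` (the node values) strictly increasing away from the
root, `rankSup s s' T` is the number of connected components of the superlevel
set `{f ≥ s'}` of `T` that intersect the superlevel set `{f ≥ s}`.  (Since `f`
increases away from the root, superlevel sets are disjoint unions of full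
subtrees, so the components can be counted recursively.)  This is the rank of
the map in zero-dimensional homology induced by the inclusion of the sublevel
set `{-f ≤ -s}` into the sublevel set `{-f ≤ -s'}`. -/
noncomputable def rankSup (s s' : ℝ) : RTree → ℕ
  | node x ts =>
    if s' ≤ x then (if s ≤ maxLeaf (node x ts) then 1 else 0)
    else (ts.attach.map fun c => rankSup s s' c.1).sum
  decreasing_by
    have := List.sizeOf_lt_of_mem c.2
    simp only [RTree.node.sizeOf_spec] at *
    omega

/-- `B` is the barcode of the zero-dimensional persistent homology of the
sublevel-set filtration of `-f` on `T` (where the node values of `T` are the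
values of `f`): every interval `[birth, death)` is nonempty (`death` may be
`⊤ = +∞`), and for all `a ≤ a'` the number of intervals with `birth ≤ a` and
`death > a'` equals the rank of the map `H₀({-f ≤ a}) → H₀({-f ≤ a'})`, i.e.
the number of connected components of `{f ≥ -a'}` meeting `{f ≥ -a}`.  This
rank condition determines the barcode uniquely. -/
def IsPHBarcodeNeg (T : RTree) (B : Multiset (ℝ × EReal)) : Prop :=
  (∀ p ∈ B, (p.1 : EReal) < p.2) ∧
  ∀ a a' : ℝ, a ≤ a' →
    (B.filter fun p => p.1 ≤ a ∧ (a' : EReal) < p.2).card = rankSup (-a) (-a') T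

end RTree


namespace Hlp

theorem le_foldr_max (l : List ℝ) (x : ℝ) : x ≤ l.foldr max x := by
  induction l with
  | nil => simp
  | cons a l ih => exact le_trans ih (le_max_right _ _)

theorem foldr_max_cases (l : List ℝ) (x : ℝ) : l.foldr max x = x ∨ l.foldr max x ∈ l := by
  induction l with
  | nil => simp
  | cons a l ih =>
    rcases le_total a (l.foldr max x) with h | h
    · rcases ih with h' | h'
      · left; simpa [max_eq_right h] using h'
      · right; simp only [List.foldr_cons, max_eq_right h]; exact List.mem_cons_of_mem _ h'
    · right; simp [max_eq_left h]

theorem le_foldr_max_of_mem {l : List ℝ} {a : ℝ} (h : a ∈ l) (x : ℝ) : a ≤ l.foldr max x := by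
  induction l with
  | nil => simp at h
  | cons b l ih =>
    rcases List.mem_cons.1 h with rfl | h
    · exact le_max_left _ _
    · exact le_trans (ih h) (le_max_right _ _)

theorem le_foldr_max_iff (l : List ℝ) (x s : ℝ) :
    s ≤ l.foldr max x ↔ s ≤ x ∨ ∃ a ∈ l, s ≤ a := by
  constructor
  · intro h
    rcases foldr_max_cases l x with h' | h'
    · exact Or.inl (h' ▸ h)
    · exact Or.inr ⟨_, h', h⟩
  · rintro (h | ⟨a, ha, h⟩)
    · exact le_trans h (le_foldr_max l x)
    · exact le_trans h (le_foldr_max_of_mem ha x)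

/-- card of a filter as a sum of indicators. -/
theorem card_filter_eq_sum {α : Type*} (P : α → Prop) [DecidablePred P] (m : Multiset α) :
    (m.filter P).card = (m.map fun a => if P a then (1 : ℕ) else 0).sum := by
  induction m using Multiset.induction with
  | empty => simp
  | cons a s ih =>
    rw [Multiset.filter_cons, Multiset.card_add, ih, Multiset.map_cons, Multiset.sum_cons]
    split <;> simp

/-- filtering a sum of multisets. -/
theorem card_filter_sum_map {α β : Type*} (P : β → Prop) [DecidablePred P]
    (m : Multiset α) (f : α → Multiset β) :
    (((m.map f).sum).filter P).card = (m.map fun a => ((f a).filter P).card).sum := by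
  induction m using Multiset.induction with
  | empty => simp
  | cons a s ih =>
    rw [Multiset.map_cons, Multiset.sum_cons, Multiset.filter_add, Multiset.card_add, ih,
      Multiset.map_cons, Multiset.sum_cons]

/-- sum over an attached list as a multiset sum. -/
theorem attach_sum {α β : Type*} [AddCommMonoid β] (l : List α) (h : α → β) :
    (l.attach.map fun c => h c.1).sum = ((l : Multiset α).map h).sum := by
  rw [List.attach_map_val, Multiset.map_coe, Multiset.sum_coe]

theorem mem_msum {β : Type*} {p : β} {S : Multiset (Multiset β)} :
    p ∈ S.sum ↔ ∃ t ∈ S, p ∈ t := by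
  induction S using Multiset.induction with
  | empty => simp
  | cons a s ih => simp [Multiset.sum_cons, Multiset.mem_add, ih]

end Hlp

namespace RTree

theorem ind {P : RTree → Prop} (h : ∀ x ts, (∀ c ∈ ts, P c) → P (node x ts)) : ∀ T, P T
  | node x ts => h x ts (fun c hc => ind h c)
  decreasing_by
    have := List.sizeOf_lt_of_mem hc
    simp only [RTree.node.sizeOf_spec] at *
    omega

theorem maxLeaf_node (x : ℝ) (ts : List RTree) :
    maxLeaf (node x ts) = (ts.map maxLeaf).foldr max x := by
  rw [maxLeaf, List.foldr_attach (l := ts) (f := fun c m => max (maxLeaf c) m),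
    List.foldr_map]

theorem rootVal_le_maxLeaf : ∀ T : RTree, rootVal T ≤ maxLeaf T
  | node x ts => by
    rw [maxLeaf_node]; exact Hlp.le_foldr_max _ _

theorem le_maxLeaf_iff (s x : ℝ) (ts : List RTree) :
    s ≤ maxLeaf (node x ts) ↔ s ≤ x ∨ ∃ c ∈ ts, s ≤ maxLeaf c := by
  rw [maxLeaf_node, Hlp.le_foldr_max_iff]
  simp

theorem Increasing.lt_root {x : ℝ} {ts : List RTree} (h : Increasing (RTree.node x ts)) :
    ∀ c ∈ ts, x < rootVal c := by cases h; assumption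

theorem Increasing.child {x : ℝ} {ts : List RTree} (h : Increasing (RTree.node x ts)) :
    ∀ c ∈ ts, Increasing c := by cases h; assumption

/-- if `maxLeaf > x` then it is attained by a child. -/
theorem maxLeaf_attained {x : ℝ} {ts : List RTree} (h : x < maxLeaf (node x ts)) :
    ∃ c ∈ ts, maxLeaf (node x ts) = maxLeaf c := by
  rw [maxLeaf_node] at h ⊢
  rcases Hlp.foldr_max_cases (ts.map maxLeaf) x with h' | h'
  · exact absurd h' (by intro h''; rw [h''] at h; exact lt_irrefl _ h)
  · rcases List.mem_map.1 h' with ⟨c, hc, hcc⟩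
    exact ⟨c, hc, hcc.symm⟩

theorem tmdAux_node (x : ℝ) (ts : List RTree) :
    tmdAux (node x ts) =
      (↑(ts.map fun c => (x, maxLeaf c)) - {(x, maxLeaf (node x ts))})
        + (((ts : Multiset RTree)).map tmdAux).sum := by
  rw [tmdAux, Hlp.attach_sum]

theorem tmdAux_spec : ∀ T : RTree, Increasing T →
    ∀ p ∈ tmdAux T, rootVal T ≤ p.1 ∧ p.1 < p.2 := by
  refine ind (fun x ts IH hInc p hp => ?_)
  rw [tmdAux_node] at hp
  rcases Multiset.mem_add.1 hp with hp | hp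
  · have hp' : p ∈ (↑(ts.map fun c => (x, maxLeaf c)) : Multiset (ℝ × ℝ)) :=
      Multiset.mem_of_le (Multiset.sub_le_self _ _) hp
    rw [Multiset.mem_coe, List.mem_map] at hp'
    rcases hp' with ⟨c, hc, rfl⟩
    refine ⟨le_refl _, ?_⟩
    exact lt_of_lt_of_le (hInc.lt_root c hc) (rootVal_le_maxLeaf c)
  · rw [Hlp.mem_msum] at hp
    rcases hp with ⟨m, hm, hpm⟩
    rw [Multiset.mem_map] at hm
    rcases hm with ⟨c, hc, rfl⟩
    rw [Multiset.mem_coe] at hc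
    have := IH c hc (hInc.child c hc) p hpm
    exact ⟨le_trans (le_of_lt (hInc.lt_root c hc)) this.1, this.2⟩

theorem rank_eq : ∀ T : RTree, Increasing T → ∀ s s' : ℝ, s' ≤ s →
    rankSup s s' T = (if s ≤ maxLeaf T then 1 else 0)
      + ((tmdAux T).filter fun p => p.1 < s' ∧ s ≤ p.2).card := by
  refine ind (fun x ts IH hInc s s' hss => ?_)
  rw [rankSup]
  by_cases hx : s' ≤ x
  · rw [if_pos hx]
    have h0 : ((tmdAux (node x ts)).filter fun p => p.1 < s' ∧ s ≤ p.2) = 0 := by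
      rw [Multiset.filter_eq_nil]
      rintro p hp ⟨h1, -⟩
      have := (tmdAux_spec _ hInc p hp).1
      simp only [rootVal] at this
      linarith
    rw [h0]; simp
  · rw [if_neg hx]
    push_neg at hx
    have hxs : x < s := lt_of_lt_of_le hx hss
    -- notation
    have hL : ((ts.attach.map fun c => rankSup s s' c.1).sum : ℕ)
        = ((ts : Multiset RTree).map fun c => (if s ≤ maxLeaf c then 1 else 0)
            + ((tmdAux c).filter fun p => p.1 < s' ∧ s ≤ p.2).card).sum := by
      rw [Hlp.attach_sum]
      exact congrArg Multiset.sum (Multiset.map_congr rfl fun c hc =>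
        IH c (Multiset.mem_coe.1 hc) (hInc.child c (Multiset.mem_coe.1 hc)) s s' hss)
    rw [hL, Multiset.sum_map_add]
    -- the candidate-bar multiset
    have hA : (↑(ts.map fun c => (x, maxLeaf c)) : Multiset (ℝ × ℝ))
        = (ts : Multiset RTree).map fun c => (x, maxLeaf c) := by
      rw [Multiset.map_coe]
    have hcardA : (((↑(ts.map fun c => (x, maxLeaf c)) : Multiset (ℝ × ℝ)).filter
          fun p => p.1 < s' ∧ s ≤ p.2).card)
        = ((ts : Multiset RTree).map fun c => if s ≤ maxLeaf c then (1:ℕ) else 0).sum := by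
      rw [hA, Hlp.card_filter_eq_sum, Multiset.map_map]
      exact congrArg Multiset.sum (Multiset.map_congr rfl fun c _ => by
        simp only [Function.comp]
        exact if_congr (by simp [hx]) rfl rfl)
    have hq : ((x, maxLeaf (node x ts)) : ℝ × ℝ).1 < s' ∧ s ≤ ((x, maxLeaf (node x ts)) : ℝ × ℝ).2
        ↔ s ≤ maxLeaf (node x ts) := by simp [hx]
    have hsub : (({((x, maxLeaf (node x ts)))} : Multiset (ℝ × ℝ)).filter
          fun p => p.1 < s' ∧ s ≤ p.2)
        ≤ ((↑(ts.map fun c => (x, maxLeaf c)) : Multiset (ℝ × ℝ)).filter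
          fun p => p.1 < s' ∧ s ≤ p.2) := by
      rw [Multiset.filter_singleton]
      split
      · rename_i hPq
        rw [Multiset.singleton_le, Multiset.mem_filter]
        have hs : s ≤ maxLeaf (node x ts) := hq.1 hPq
        rcases maxLeaf_attained (lt_of_lt_of_le hxs hs) with ⟨c0, hc0, hml⟩
        refine ⟨?_, hPq⟩
        rw [Multiset.mem_coe, List.mem_map]
        exact ⟨c0, hc0, by rw [hml]⟩
      · exact Multiset.zero_le _
    have hcardq : ((({((x, maxLeaf (node x ts)))} : Multiset (ℝ × ℝ)).filter
          fun p => p.1 < s' ∧ s ≤ p.2).card) = if s ≤ maxLeaf (node x ts) then 1 else 0 := by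
      rw [Multiset.filter_singleton]
      split
      · rename_i hPq; rw [if_pos (hq.1 hPq)]; rfl
      · rename_i hPq; rw [if_neg (fun hs => hPq (hq.2 hs))]; rfl
    have hIle : (if s ≤ maxLeaf (node x ts) then (1:ℕ) else 0)
        ≤ ((ts : Multiset RTree).map fun c => if s ≤ maxLeaf c then (1:ℕ) else 0).sum := by
      split
      · rename_i hs
        rcases maxLeaf_attained (lt_of_lt_of_le hxs hs) with ⟨c0, hc0, hml⟩
        have hmem : (if s ≤ maxLeaf c0 then (1:ℕ) else 0)
            ∈ (ts : Multiset RTree).map fun c => if s ≤ maxLeaf c then (1:ℕ) else 0 :=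
          Multiset.mem_map_of_mem _ (Multiset.mem_coe.2 hc0)
        have : (if s ≤ maxLeaf c0 then (1:ℕ) else 0) = 1 := if_pos (hml ▸ hs)
        calc (1:ℕ) = _ := this.symm
          _ ≤ _ := Multiset.single_le_sum (fun y _ => Nat.zero_le y) _ hmem
      · exact Nat.zero_le _
    rw [tmdAux_node, Multiset.filter_add, Multiset.card_add, Multiset.filter_sub,
      Multiset.card_sub hsub, Hlp.card_filter_sum_map, hcardA, hcardq]
    omega


theorem barcode_unique (B₁ B₂ : Multiset (ℝ × EReal))
    (h₁ : ∀ p ∈ B₁, (p.1 : EReal) < p.2) (h₂ : ∀ p ∈ B₂, (p.1 : EReal) < p.2)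
    (h : ∀ a a' : ℝ, a ≤ a' →
      (B₁.filter fun p => p.1 ≤ a ∧ (a' : EReal) < p.2).card
        = (B₂.filter fun p => p.1 ≤ a ∧ (a' : EReal) < p.2).card) :
    B₁ = B₂ := by
  ext q
  obtain ⟨x, y⟩ := q
  by_cases hxy : (x : EReal) < y
  case neg =>
    rw [Multiset.count_eq_zero_of_notMem (fun hm => hxy (h₁ _ hm)),
      Multiset.count_eq_zero_of_notMem (fun hm => hxy (h₂ _ hm))]
  case pos =>
  set M := B₁ + B₂ with hM
  have hM1 : ∀ p ∈ M, (p.1 : EReal) < p.2 := by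
    intro p hp; rcases Multiset.mem_add.1 hp with h' | h'
    exacts [h₁ p h', h₂ p h']
  set l : List ℝ := (M.toList.filter fun p => decide (p.2 < y)).map fun p => p.2.toReal with hl
  set a' : ℝ := l.foldr max x with ha'
  have hxa' : x ≤ a' := Hlp.le_foldr_max _ _
  have hmem_l : ∀ r ∈ l, ∃ p ∈ M, p.2 < y ∧ p.2.toReal = r := by
    intro r hr
    rw [hl, List.mem_map] at hr
    rcases hr with ⟨p, hp, rfl⟩
    rw [List.mem_filter] at hp
    exact ⟨p, Multiset.mem_toList.1 hp.1, of_decide_eq_true hp.2, rfl⟩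
  have ha'y : (a' : EReal) < y := by
    rcases Hlp.foldr_max_cases l x with h' | h'
    · rw [ha', h']; exact hxy
    · rcases hmem_l _ h' with ⟨p, hp, hpy, hpr⟩
      have hbot : p.2 ≠ ⊥ := ne_bot_of_gt (hM1 p hp)
      have htop : p.2 ≠ ⊤ := ne_top_of_lt hpy
      calc (a' : EReal) = ((p.2.toReal : ℝ) : EReal) := by rw [ha', ← hpr]
        _ = p.2 := EReal.coe_toReal htop hbot
        _ < y := hpy
  have hgap : ∀ p ∈ M, ¬((a' : EReal) < p.2 ∧ p.2 < y) := by
    rintro p hp ⟨hlt, hlty⟩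
    have hbot : p.2 ≠ ⊥ := ne_bot_of_gt (hM1 p hp)
    have htop : p.2 ≠ ⊤ := ne_top_of_lt hlty
    have hmem : p.2.toReal ∈ l := by
      rw [hl, List.mem_map]
      exact ⟨p, List.mem_filter.2 ⟨Multiset.mem_toList.2 hp, decide_eq_true hlty⟩, rfl⟩
    have hle : p.2 ≤ (a' : EReal) := by
      rw [← EReal.coe_toReal htop hbot, EReal.coe_le_coe_iff]
      exact Hlp.le_foldr_max_of_mem hmem x
    exact absurd hlt (not_lt.2 hle)
  have hD : ∀ a : ℝ, a ≤ a' →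
      (B₁.filter fun p => p.1 ≤ a ∧ p.2 = y).card
        = (B₂.filter fun p => p.1 ≤ a ∧ p.2 = y).card := by
    intro a haa
    by_cases hytop : y = ⊤
    · subst hytop
      have conv : ∀ (B : Multiset (ℝ × EReal)), (∀ p ∈ B, p ∈ M) →
          (B.filter fun p => p.1 ≤ a ∧ (a' : EReal) < p.2).card
            = (B.filter fun p => p.1 ≤ a ∧ p.2 = (⊤ : EReal)).card := by
        intro B hBM
        congr 1
        refine Multiset.filter_congr fun p hp => ?_
        constructor
        · rintro ⟨hpa, hpb⟩
          refine ⟨hpa, ?_⟩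
          by_contra hne
          exact hgap p (hBM p hp) ⟨hpb, lt_top_iff_ne_top.2 hne⟩
        · rintro ⟨hpa, hpb⟩
          exact ⟨hpa, hpb ▸ EReal.coe_lt_top a'⟩
      rw [← conv B₁ (fun p hp => Multiset.mem_add.2 (Or.inl hp)),
        ← conv B₂ (fun p hp => Multiset.mem_add.2 (Or.inr hp))]
      exact h a a' haa
    · have hybot : y ≠ ⊥ := ne_bot_of_gt hxy
      set t : ℝ := y.toReal with ht
      have hyt : (t : EReal) = y := EReal.coe_toReal hytop hybot
      have ha't : a' ≤ t := by
        have h' := ha'y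
        rw [← hyt] at h'
        exact le_of_lt (EReal.coe_lt_coe_iff.1 h')
      have hsplit : ∀ (B : Multiset (ℝ × EReal)), (∀ p ∈ B, p ∈ M) →
          (B.filter fun p => p.1 ≤ a ∧ (a' : EReal) < p.2).card
            = (B.filter fun p => p.1 ≤ a ∧ p.2 = y).card
              + (B.filter fun p => p.1 ≤ a ∧ (t : EReal) < p.2).card := by
        intro B hBM
        have h1 : (B.filter fun p => p.1 ≤ a ∧ (a' : EReal) < p.2)
            = B.filter fun p => (p.1 ≤ a ∧ p.2 = y) ∨ (p.1 ≤ a ∧ (t : EReal) < p.2) := by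
          refine Multiset.filter_congr fun p hp => ?_
          constructor
          · rintro ⟨hpa, hpb⟩
            rcases lt_trichotomy p.2 y with hc | hc | hc
            · exact absurd ⟨hpb, hc⟩ (hgap p (hBM p hp))
            · exact Or.inl ⟨hpa, hc⟩
            · exact Or.inr ⟨hpa, hyt ▸ hc⟩
          · rintro (⟨hpa, hpb⟩ | ⟨hpa, hpb⟩)
            · exact ⟨hpa, hpb ▸ ha'y⟩
            · exact ⟨hpa, lt_of_le_of_lt (EReal.coe_le_coe_iff.2 ha't) hpb⟩
        have h2 : (B.filter fun p => (p.1 ≤ a ∧ p.2 = y) ∧ (p.1 ≤ a ∧ (t : EReal) < p.2)) = 0 := by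
          rw [Multiset.filter_eq_nil]
          rintro p hp ⟨⟨-, hpy⟩, ⟨-, hpt⟩⟩
          rw [hpy, ← hyt] at hpt
          exact lt_irrefl _ hpt
        have h4 := congrArg Multiset.card
          (Multiset.filter_add_filter (fun p : ℝ × EReal => p.1 ≤ a ∧ p.2 = y)
            (fun p => p.1 ≤ a ∧ (t : EReal) < p.2) B)
        rw [Multiset.card_add, Multiset.card_add, h2] at h4
        rw [h1]
        simpa using h4.symm
      have e1 := h a a' haa
      have e2 := h a t (le_trans haa ha't)
      rw [hsplit B₁ (fun p hp => Multiset.mem_add.2 (Or.inl hp)),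
        hsplit B₂ (fun p hp => Multiset.mem_add.2 (Or.inr hp)), e2] at e1
      exact Nat.add_right_cancel e1
  set lb : List ℝ := (M.toList.filter fun p => decide (p.1 < x)).map fun p => p.1 with hlb
  set x' : ℝ := lb.foldr max (x - 1) with hx'
  have hx'x : x' < x := by
    rcases Hlp.foldr_max_cases lb (x - 1) with h' | h'
    · rw [hx', h']; linarith
    · rw [hlb] at h'
      rw [List.mem_map] at h'
      rcases h' with ⟨p, hp, hpp⟩
      rw [List.mem_filter] at hp
      rw [hx', ← hpp]
      exact of_decide_eq_true hp.2
  have hgapb : ∀ p ∈ M, p.1 < x → p.1 ≤ x' := by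
    intro p hp hpx
    refine Hlp.le_foldr_max_of_mem ?_ _
    rw [hlb, List.mem_map]
    exact ⟨p, List.mem_filter.2 ⟨Multiset.mem_toList.2 hp, decide_eq_true hpx⟩, rfl⟩
  have hcount : ∀ (B : Multiset (ℝ × EReal)), (∀ p ∈ B, p ∈ M) →
      (B.filter fun p => p.1 ≤ x ∧ p.2 = y).card
        = B.count (x, y) + (B.filter fun p => p.1 ≤ x' ∧ p.2 = y).card := by
    intro B hBM
    have h1 : (B.filter fun p => p.1 ≤ x ∧ p.2 = y)
        = B.filter fun p => p = (x, y) ∨ (p.1 ≤ x' ∧ p.2 = y) := by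
      refine Multiset.filter_congr fun p hp => ?_
      constructor
      · rintro ⟨hpa, hpb⟩
        rcases eq_or_lt_of_le hpa with hc | hc
        · left
          obtain ⟨p1, p2⟩ := p
          simp only at hc hpb
          rw [hc, hpb]
        · exact Or.inr ⟨hgapb p (hBM p hp) hc, hpb⟩
      · rintro (rfl | ⟨hpa, hpb⟩)
        · exact ⟨le_refl x, rfl⟩
        · exact ⟨le_trans hpa (le_of_lt hx'x), hpb⟩
    have h2 : (B.filter fun p => (p = (x, y)) ∧ (p.1 ≤ x' ∧ p.2 = y)) = 0 := by
      rw [Multiset.filter_eq_nil]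
      rintro p hp ⟨rfl, ⟨hpa, -⟩⟩
      exact absurd hpa (not_le.2 hx'x)
    have h3 : (B.filter fun p => p = (x, y)).card = B.count (x, y) := by
      rw [Multiset.count_eq_card_filter_eq]
      congr 1
      exact Multiset.filter_congr fun p _ => eq_comm
    have h4 := congrArg Multiset.card
      (Multiset.filter_add_filter (fun p : ℝ × EReal => p = (x, y))
        (fun p => p.1 ≤ x' ∧ p.2 = y) B)
    rw [Multiset.card_add, Multiset.card_add, h2, h3] at h4
    rw [h1]
    simpa using h4.symm
  have e1 := hD x hxa'
  have e2 := hD x' (le_trans (le_of_lt hx'x) hxa')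
  rw [hcount B₁ (fun p hp => Multiset.mem_add.2 (Or.inl hp)),
    hcount B₂ (fun p hp => Multiset.mem_add.2 (Or.inr hp)), e2] at e1
  exact Nat.add_right_cancel e1

end RTree

open RTree in
/-- let `T` be a finite rooted tree and `f` (recorded as the node
values of `T`) strictly increasing along edges directed away from the root.
Let `B` be the zero-dimensional persistent homology barcode `PH(T, -f)` of the
sublevel filtration of `-f`.  The extended barcode `EPH₀(T,-f)` replaces the
right endpoint `+∞` of the unique infinite interval by `max(-f) = -f(r)`
(making it closed).  Then `TMD(T,f)` equals `-EPH₀(T,-f)`, the negation of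
this barcode (each interval with endpoints `x ≤ y` becoming the interval with
endpoints `-y ≤ -x`). -/
theorem tmd_eq_neg_eph (T : RTree) (hT : Increasing T)
    (B : Multiset (ℝ × EReal)) (hB : IsPHBarcodeNeg T B) :
    tmd T = B.map fun p =>
      (-(if p.2 = (⊤ : EReal) then -T.rootVal else p.2.toReal), -p.1) := by
  obtain ⟨hB1, hB2⟩ := hB
  set B₀ : Multiset (ℝ × EReal) :=
    (-T.maxLeaf, (⊤ : EReal)) ::ₘ
      (tmdAux T).map (fun p => ((-p.2 : ℝ), ((-p.1 : ℝ) : EReal))) with hB₀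
  have hB₀1 : ∀ p ∈ B₀, (p.1 : EReal) < p.2 := by
    intro p hp
    rcases Multiset.mem_cons.1 hp with rfl | hp
    · exact EReal.coe_lt_top _
    · rcases Multiset.mem_map.1 hp with ⟨q, hq, rfl⟩
      exact EReal.coe_lt_coe_iff.2 (by have := (tmdAux_spec T hT q hq).2; simp only; linarith)
  have hB₀2 : ∀ a a' : ℝ, a ≤ a' →
      ((B₀.filter fun p => p.1 ≤ a ∧ (a' : EReal) < p.2).card) = rankSup (-a) (-a') T := by
    intro a a' haa
    rw [hB₀, Multiset.filter_cons, Multiset.card_add,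
      rank_eq T hT (-a) (-a') (by linarith)]
    congr 1
    · by_cases hh : ((-T.maxLeaf, (⊤ : EReal)).1 ≤ a ∧ ((a' : ℝ) : EReal) < (-T.maxLeaf, (⊤ : EReal)).2)
      · rw [if_pos hh, if_pos (by have := hh.1; simp only at this; linarith)]
        simp
      · rw [if_neg hh, if_neg (fun hc => hh ⟨by simp only; linarith, EReal.coe_lt_top a'⟩)]
        simp
    · rw [Hlp.card_filter_eq_sum, Hlp.card_filter_eq_sum, Multiset.map_map]
      refine congrArg Multiset.sum (Multiset.map_congr rfl fun q hq => ?_)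
      simp only [Function.comp]
      refine if_congr ?_ rfl rfl
      constructor
      · rintro ⟨hc1, hc2⟩
        have := EReal.coe_lt_coe_iff.1 hc2
        exact ⟨by linarith, by linarith⟩
      · rintro ⟨hc1, hc2⟩
        exact ⟨by linarith, EReal.coe_lt_coe_iff.2 (by linarith)⟩
  have hBB : B = B₀ :=
    barcode_unique B B₀ hB1 hB₀1
      (fun a a' haa => (hB2 a a' haa).trans (hB₀2 a a' haa).symm)
  rw [hBB, hB₀, Multiset.map_cons, Multiset.map_map, tmd]
  congr 1
  · simp
  · refine ((Multiset.map_congr rfl fun q hq => ?_).trans (Multiset.map_id _)).symm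
    simp [Function.comp, EReal.coe_ne_top, EReal.toReal_coe]
end

section
/- Let T be a finite rooted tree with intrinsic-distance function d from the root, and let p(t) be the number of points of T at intrinsic distance exactly t from the root (the topological morphology function). If t is generic, i.e., t is not an endpoint of any interval of TMD(T,d), then p(t) equals the number of intervals of TMD(T,d) that contain t. -/
namespace RTree

/-- The topological morphology function: here the node values are the intrinsic
distances `d` from the root, extended linearly along edges, so the number of
points of the (geometric realization of the) tree at intrinsic distance exactly
`t` from the root is the number of (half-open) edges `(d(parent), d(child)]`
containing `t`. -/
noncomputable def pFun (t : ℝ) : RTree → ℕ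
  | node x ts =>
    (ts.attach.map fun c =>
      (if x < t ∧ t ≤ rootVal c.1 then 1 else 0) + pFun t c.1).sum
  decreasing_by
    have := List.sizeOf_lt_of_mem c.2
    simp only [RTree.node.sizeOf_spec] at *
    omega


end RTree

namespace RTree

lemma le_foldr_max {α : Type*} (g : α → ℝ) (a : ℝ) :
    ∀ l : List α, a ≤ l.foldr (fun c m => max (g c) m) a
  | [] => le_refl a
  | _ :: tl => le_trans (le_foldr_max g a tl) (le_max_right _ _)

lemma foldr_max_exists {α : Type*} (g : α → ℝ) (a : ℝ) :
    ∀ l : List α, l ≠ [] → (∀ c ∈ l, a ≤ g c) →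
      ∃ c ∈ l, g c = l.foldr (fun c m => max (g c) m) a
  | [], h, _ => absurd rfl h
  | h :: tl, _, hle => by
    by_cases htl : tl = []
    · subst htl
      exact ⟨h, List.mem_cons_self, by simp [max_eq_left (hle h (by simp))]⟩
    · obtain ⟨c, hc, hceq⟩ := foldr_max_exists g a tl htl
        (fun c hc => hle c (List.mem_cons_of_mem _ hc))
      rcases le_total (g h) (tl.foldr (fun c m => max (g c) m) a) with hh | hh
      · exact ⟨c, List.mem_cons_of_mem _ hc, by simp [max_eq_right hh, hceq]⟩
      · exact ⟨h, List.mem_cons_self, by simp [max_eq_left hh]⟩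

lemma rootVal_le_maxLeaf_s4 (T : RTree) : T.rootVal ≤ T.maxLeaf := by
  obtain ⟨x, ts⟩ := T
  rw [rootVal, maxLeaf]
  exact le_foldr_max _ _ _

lemma exists_maxLeaf_child {x : ℝ} {ts : List RTree} (h : ts ≠ [])
    (hle : ∀ c ∈ ts, x ≤ maxLeaf c) :
    ∃ c ∈ ts, maxLeaf c = maxLeaf (node x ts) := by
  rw [maxLeaf]
  obtain ⟨c, hc, hceq⟩ := foldr_max_exists (fun c : {c // c ∈ ts} => maxLeaf c.1) x ts.attach
    (by simpa using h) (fun c _ => hle c.1 c.2)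
  exact ⟨c.1, c.2, hceq⟩

lemma mem_list_sum {α : Type*} {a : α} : ∀ {l : List (Multiset α)},
    a ∈ l.sum ↔ ∃ m ∈ l, a ∈ m := by
  intro l
  induction l with
  | nil => simp
  | cons h tl ih => simp [ih]

lemma card_filter_list_sum {α : Type*} (p : α → Prop) [DecidablePred p] :
    ∀ l : List (Multiset α),
      ((l.sum).filter p).card = (l.map fun m => (m.filter p).card).sum := by
  intro l
  induction l with
  | nil => simp
  | cons h tl ih => simp [Multiset.filter_add, ih]

lemma card_filter_coe_map (p : ℝ × ℝ → Prop) [DecidablePred p] (f : RTree → ℝ × ℝ) :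
    ∀ ts : List RTree,
      ((↑(ts.map f) : Multiset (ℝ × ℝ)).filter p).card
        = (ts.map fun c => if p (f c) then 1 else 0).sum := by
  intro ts
  induction ts with
  | nil => simp
  | cons h tl ih =>
    by_cases hp : p (f h) <;>
      [ (simp [List.map_cons, Multiset.filter_cons, hp] at ih ⊢; omega);
        (simp [List.map_cons, Multiset.filter_cons, hp] at ih ⊢; omega)]

lemma list_sum_map_add {α : Type*} (l : List α) (f g : α → ℕ) :
    (l.map fun a => f a + g a).sum = (l.map f).sum + (l.map g).sum := by
  induction l with
  | nil => simp
  | cons h tl ih => simp [ih]; omega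

lemma indicator_split {x r m t : ℝ} (hxr : x < r) (hrm : r ≤ m) (htm : t ≠ m) :
    (if x < t ∧ t ≤ r then 1 else 0) + (if r < t ∧ t < m then 1 else 0)
      = if x < t ∧ t < m then (1 : ℕ) else 0 := by
  by_cases hxt : x < t
  · by_cases htr : t ≤ r
    · have htm2 : t < m := lt_of_le_of_ne (htr.trans hrm) htm
      have hnr : ¬ (r < t ∧ t < m) := fun hh => absurd hh.1 (not_lt.mpr htr)
      simp [hxt, htr, htm2, hnr]
    · push_neg at htr
      by_cases htm3 : t < m
      · simp [hxt, htr, htm3, not_le.mpr htr]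
      · simp [hxt, htr, htm3, not_le.mpr htr]
  · have hnr : ¬ r < t := fun h => hxt (hxr.trans h)
    simp [hxt, hnr]

lemma sum_attach_map (l : List RTree) (f : RTree → ℕ) :
    (l.attach.map fun c => f c.1).sum = (l.map f).sum := by
  rw [List.attach_map_val]

lemma key (t : ℝ) : ∀ (n : ℕ) (T : RTree), sizeOf T ≤ n → Increasing T →
    (∀ p ∈ tmdAux T, t ≠ p.1 ∧ t ≠ p.2) → t ≠ maxLeaf T →
    pFun t T = ((tmd T).filter fun p => p.1 < t ∧ t < p.2).card := by
  intro n
  induction n with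
  | zero =>
    rintro ⟨x, ts⟩ hs
    simp only [RTree.node.sizeOf_spec] at hs
    omega
  | succ n ih =>
    rintro ⟨x, ts⟩ hs hinc haux hm
    by_cases hts : ts = []
    · subst hts
      have hms : maxLeaf (node x []) = x := by rw [maxLeaf]; simp
      have hp : ¬ (x < t ∧ t < x) := fun h => absurd (h.1.trans h.2) (lt_irrefl x)
      rw [pFun, tmd, tmdAux]
      simp [rootVal, hms, Multiset.filter_singleton, Multiset.filter_cons, hp]
    · cases hinc with
    | node hlt hinct =>
      have hsz : ∀ c ∈ ts, sizeOf c ≤ n := by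
        intro c hc
        have := List.sizeOf_lt_of_mem hc
        simp only [RTree.node.sizeOf_spec] at hs
        omega
      have hxle : ∀ c ∈ ts, x ≤ maxLeaf c := fun c hc =>
        ((hlt c hc).trans_le (rootVal_le_maxLeaf_s4 c)).le
      obtain ⟨c₀, hc₀, hMc₀⟩ := exists_maxLeaf_child hts hxle
      have hmemA : (x, maxLeaf (node x ts))
          ∈ (↑(ts.map fun c => (x, maxLeaf c)) : Multiset (ℝ × ℝ)) := by
        rw [Multiset.mem_coe]
        exact List.mem_map.mpr ⟨c₀, hc₀, by rw [hMc₀]⟩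
      obtain ⟨A', hA'⟩ := Multiset.exists_cons_of_mem hmemA
      have hsub : (↑(ts.map fun c => (x, maxLeaf c)) : Multiset (ℝ × ℝ))
          - {(x, maxLeaf (node x ts))} = A' := by
        rw [hA', Multiset.sub_singleton, Multiset.erase_cons_head]
      have htmdAux : tmdAux (node x ts)
          = A' + (ts.attach.map fun c => tmdAux c.1).sum := by
        rw [tmdAux, hsub]
      have hauxc : ∀ c ∈ ts, ∀ p ∈ tmdAux c, t ≠ p.1 ∧ t ≠ p.2 := by
        intro c hc p hp
        refine haux p ?_
        rw [htmdAux, Multiset.mem_add]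
        exact Or.inr (mem_list_sum.mpr ⟨tmdAux c,
          List.mem_map.mpr ⟨⟨c, hc⟩, List.mem_attach _ _, rfl⟩, hp⟩)
      have htm : ∀ c ∈ ts, t ≠ maxLeaf c := by
        intro c hc
        by_cases hcM : maxLeaf c = maxLeaf (node x ts)
        · rw [hcM]; exact hm
        · have hmem : (x, maxLeaf c) ∈ tmdAux (node x ts) := by
            rw [tmdAux, Multiset.sub_singleton, Multiset.mem_add]
            left
            refine (Multiset.mem_erase_of_ne
              (fun h => hcM (congrArg Prod.snd h))).mpr ?_
            rw [Multiset.mem_coe]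
            exact List.mem_map.mpr ⟨c, hc, rfl⟩
          exact (haux _ hmem).2
      have hIH : ∀ c ∈ ts, pFun t c
          = (if rootVal c < t ∧ t < maxLeaf c then 1 else 0)
            + ((tmdAux c).filter fun p => p.1 < t ∧ t < p.2).card := by
        intro c hc
        rw [ih c (hsz c hc) (hinct c hc) (hauxc c hc) (htm c hc), tmd]
        by_cases hp : rootVal c < t ∧ t < maxLeaf c <;>
          simp [Multiset.filter_cons, hp] <;> omega
      have hLHS : pFun t (node x ts)
          = (ts.map fun c => if x < t ∧ t < maxLeaf c then 1 else 0).sum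
            + (ts.attach.map fun c =>
                ((tmdAux c.1).filter fun p => p.1 < t ∧ t < p.2).card).sum := by
        rw [pFun]
        rw [List.map_congr_left (l := ts.attach)
          (g := fun c => (if x < t ∧ t < maxLeaf c.1 then 1 else 0)
            + ((tmdAux c.1).filter fun p => p.1 < t ∧ t < p.2).card)
          (fun c _ => by
            rw [hIH c.1 c.2, ← add_assoc,
              indicator_split (hlt c.1 c.2) (rootVal_le_maxLeaf_s4 c.1) (htm c.1 c.2)])]
        rw [list_sum_map_add,
          sum_attach_map ts (fun c => if x < t ∧ t < maxLeaf c then 1 else 0)]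
      have hcardA : ((↑(ts.map fun c => (x, maxLeaf c)) : Multiset (ℝ × ℝ)).filter
            fun p => p.1 < t ∧ t < p.2).card
          = (ts.map fun c => if x < t ∧ t < maxLeaf c then 1 else 0).sum := by
        rw [card_filter_coe_map]
      have hRHS : (((tmd (node x ts)).filter fun p => p.1 < t ∧ t < p.2)).card
          = (ts.map fun c => if x < t ∧ t < maxLeaf c then 1 else 0).sum
            + (ts.attach.map fun c =>
                ((tmdAux c.1).filter fun p => p.1 < t ∧ t < p.2).card).sum := by
        have hA : (((x, maxLeaf (node x ts)) ::ₘ A').filter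
              fun p => p.1 < t ∧ t < p.2).card
            = (ts.map fun c => if x < t ∧ t < maxLeaf c then 1 else 0).sum := by
          rw [← hA', hcardA]
        have hsum : ((((ts.attach.map fun c => tmdAux c.1).sum)).filter
              fun p => p.1 < t ∧ t < p.2).card
            = (ts.attach.map fun c =>
                ((tmdAux c.1).filter fun p => p.1 < t ∧ t < p.2).card).sum := by
          rw [card_filter_list_sum, List.map_map]
          rfl
        rw [tmd, htmdAux, show rootVal (node x ts) = x from rfl]
        simp only [← Multiset.countP_eq_card_filter, Multiset.countP_cons,
          Multiset.countP_add] at hA hsum ⊢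
        omega
      rw [hLHS, hRHS]

end RTree

open RTree in
/-- let `T` be a finite rooted tree whose node values are the
intrinsic distances from the root (so the root value is `0` and values strictly
increase along edges).  If `t > 0` is generic, i.e. not an endpoint of any
interval of `TMD(T,d)`, then the topological morphology function `p(t)` equals
the number of intervals of `TMD(T,d)` containing `t`. -/
theorem pFun_eq_count_tmd (T : RTree) (hT : Increasing T) (h0 : T.rootVal = 0)
    (t : ℝ) (ht : 0 < t) (hgen : ∀ p ∈ tmd T, t ≠ p.1 ∧ t ≠ p.2) :
    pFun t T = ((tmd T).filter fun p => p.1 < t ∧ t < p.2).card := by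
  exact key t (sizeOf T) T le_rfl hT
    (fun p hp => hgen p (by rw [tmd]; exact Multiset.mem_cons_of_mem hp))
    (hgen (T.rootVal, T.maxLeaf) (by rw [tmd]; exact Multiset.mem_cons_self _ _)).2
end
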